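/- arXiv:1705.10709 — 3 statements merged into one kernel-verified Lean document; each statement's English description precedes it below -/
import Mathlib

section
/- Let G be a digraph, x a strong articulation point, and let N1, N2 partition the neighbors of x such that every path from a vertex of N1 to a vertex of N2 passes through x. Then there is a one-to-one correspondence between the maximal 2-vertex-connected subgraphs of G and those of the graph obtained from G by executing split(x, N1) (or split(x, N2)). -/
open Classical

variable {V : Type*}

/-- Reachability by a directed path staying inside the vertex set `C`. -/
def ReachIn (E : Set (V × V)) (C : Set V) (a b : V) : Prop :=
  Relation.ReflTransGen (fun p q => p ∈ C ∧ q ∈ C ∧ (p, q) ∈ E) a b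

/-- The subgraph induced by `C` is strongly connected. -/
def StronglyConnIn (E : Set (V × V)) (C : Set V) : Prop :=
  ∀ a ∈ C, ∀ b ∈ C, ReachIn E C a b

/-- `C` induces a 2-vertex-connected subgraph: at least three vertices,
strongly connected, and no strong articulation point. -/
def Is2VCS (E : Set (V × V)) (C : Set V) : Prop :=
  (∃ a ∈ C, ∃ b ∈ C, ∃ c ∈ C, a ≠ b ∧ a ≠ c ∧ b ≠ c) ∧
    StronglyConnIn E C ∧ ∀ x ∈ C, StronglyConnIn E (C \ {x})

/-- `C` induces a maximal 2-vertex-connected subgraph of the graph with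
vertex set `W` and edge set `E`. -/
def IsMax2VCS (E : Set (V × V)) (W C : Set V) : Prop :=
  C ⊆ W ∧ Is2VCS E C ∧ ∀ D : Set V, C ⊂ D → D ⊆ W → ¬ Is2VCS E D

/-- The effect of the operation `split(x, N)` on a single edge. -/
noncomputable def splitEdgeMap (x x' : V) (N : Set V) (e : V × V) : V × V :=
  if e.1 = x ∧ e.2 ∈ N then (x', e.2)
  else if e.2 = x ∧ e.1 ∈ N then (e.1, x')
  else e

lemma reachIn_mono {E : Set (V × V)} {C C' : Set V} (h : C ⊆ C') {a b : V}
    (hr : ReachIn E C a b) : ReachIn E C' a b := by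
  induction hr with
  | refl => exact Relation.ReflTransGen.refl
  | tail _ step ih => exact ih.tail ⟨h step.1, h step.2.1, step.2.2⟩

lemma reachIn_map {E₁ E₂ : Set (V × V)} {C₁ C₂ : Set V} (f : V → V)
    (hC : ∀ v ∈ C₁, f v ∈ C₂)
    (hE : ∀ p q, p ∈ C₁ → q ∈ C₁ → p ≠ q → (p, q) ∈ E₁ → (f p, f q) ∈ E₂)
    {a b : V} (hr : ReachIn E₁ C₁ a b) : ReachIn E₂ C₂ (f a) (f b) := by
  induction hr with
  | refl => exact Relation.ReflTransGen.refl
  | @tail b c _ step ih =>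
      by_cases hbc : b = c
      · subst hbc; exact ih
      · exact ih.tail ⟨hC _ step.1, hC _ step.2.1, hE _ _ step.1 step.2.1 hbc step.2.2⟩

lemma reachIn_last_mem {E : Set (V × V)} {C : Set V} {a b : V}
    (h : ReachIn E C a b) (hab : a ≠ b) : b ∈ C := by
  induction h with
  | refl => exact absurd rfl hab
  | tail _ step _ => exact step.2.1

lemma reachIn_split {E : Set (V × V)} {C : Set V} (x : V) {a b : V}
    (h : ReachIn E C a b) (ha : a ≠ x) :
    ReachIn E (C \ {x}) a b ∨
      ∃ p, p ∈ C ∧ p ≠ x ∧ ReachIn E (C \ {x}) a p ∧ (p, x) ∈ E := by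
  induction h with
  | refl => exact Or.inl Relation.ReflTransGen.refl
  | @tail b c _ step ih =>
      rcases ih with h' | h'
      · have hb : b ≠ x := by
          rcases eq_or_ne a b with rfl | hne
          · exact ha
          · exact (reachIn_last_mem h' hne).2
        by_cases hc : c = x
        · exact Or.inr ⟨b, step.1, hb, h', hc ▸ step.2.2⟩
        · exact Or.inl (h'.tail ⟨⟨step.1, hb⟩, ⟨step.2.1, hc⟩, step.2.2⟩)
      · exact Or.inr h'

lemma reachIn_out {E : Set (V × V)} {C : Set V} {a b : V}
    (h : ReachIn E C a b) : a = b ∨ ∃ q, q ∈ C ∧ q ≠ a ∧ (a, q) ∈ E := by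
  induction h using Relation.ReflTransGen.head_induction_on with
  | refl => exact Or.inl rfl
  | @head a c step _ ih =>
      rcases eq_or_ne c a with rfl | hca
      · rcases ih with rfl | h'
        · exact Or.inl rfl
        · exact Or.inr h'
      · exact Or.inr ⟨c, step.2.1, hca, step.2.2⟩

lemma Is2VCS.exists_out {E : Set (V × V)} {C : Set V} (h : Is2VCS E C) {v : V}
    (hv : v ∈ C) : ∃ q, q ∈ C ∧ q ≠ v ∧ (v, q) ∈ E := by
  obtain ⟨⟨a, ha, b, hb, c, hc, hab, hac, hbc⟩, hconn, -⟩ := h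
  obtain ⟨w, hw, hwv⟩ : ∃ w ∈ C, w ≠ v := by
    rcases eq_or_ne a v with rfl | h
    · exact ⟨b, hb, fun h => hab h.symm⟩
    · exact ⟨a, ha, h⟩
  rcases reachIn_out (hconn v hv w hw) with rfl | ⟨q, hq1, hq2, hq3⟩
  · exact absurd rfl hwv.symm
  · exact ⟨q, hq1, hq2, hq3⟩

lemma exists_third {C : Set V}
    (h : ∃ a ∈ C, ∃ b ∈ C, ∃ c ∈ C, a ≠ b ∧ a ≠ c ∧ b ≠ c) (u v : V) :
    ∃ w ∈ C, w ≠ u ∧ w ≠ v := by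
  obtain ⟨a, ha, b, hb, c, hc, hab, hac, hbc⟩ := h
  by_cases h1 : a ≠ u ∧ a ≠ v
  · exact ⟨a, ha, h1⟩
  by_cases h2 : b ≠ u ∧ b ≠ v
  · exact ⟨b, hb, h2⟩
  rw [not_and_or, not_ne_iff, not_ne_iff] at h1 h2
  rcases h1 with rfl | rfl <;> rcases h2 with rfl | rfl
  · exact absurd rfl hab
  · exact ⟨c, hc, Ne.symm hac, Ne.symm hbc⟩
  · exact ⟨c, hc, Ne.symm hbc, Ne.symm hac⟩
  · exact absurd rfl hab

lemma is2VCS_map (E₁ E₂ : Set (V × V)) (C₁ C₂ : Set V) (σ : Equiv.Perm V)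
    (h1 : ∀ v ∈ C₁, σ v ∈ C₂) (h2 : ∀ v ∈ C₂, σ.symm v ∈ C₁)
    (hE : ∀ p q, p ∈ C₁ → q ∈ C₁ → p ≠ q → (p, q) ∈ E₁ → (σ p, σ q) ∈ E₂) :
    Is2VCS E₁ C₁ → Is2VCS E₂ C₂ := by
  rintro ⟨⟨a, ha, b, hb, c, hc, hab, hac, hbc⟩, hconn, hmin⟩
  refine ⟨⟨σ a, h1 a ha, σ b, h1 b hb, σ c, h1 c hc, σ.injective.ne hab,
    σ.injective.ne hac, σ.injective.ne hbc⟩, ?_, ?_⟩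
  · intro u hu v hv
    have := reachIn_map σ h1 hE (hconn (σ.symm u) (h2 u hu) (σ.symm v) (h2 v hv))
    simpa using this
  · intro w hw u hu v hv
    have hC : ∀ z ∈ C₁ \ {σ.symm w}, σ z ∈ C₂ \ {w} := by
      intro z hz
      refine ⟨h1 z hz.1, fun h => hz.2 ?_⟩
      rw [Set.mem_singleton_iff] at h ⊢
      rw [← h, Equiv.symm_apply_apply]
    have hmem : ∀ z ∈ C₂ \ {w}, σ.symm z ∈ C₁ \ {σ.symm w} := by
      intro z hz
      refine ⟨h2 z hz.1, fun h => hz.2 ?_⟩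
      rw [Set.mem_singleton_iff] at h ⊢
      exact σ.symm.injective h
    have := reachIn_map σ hC (fun p q hp hq => hE p q hp.1 hq.1)
      (hmin (σ.symm w) (h2 w hw) (σ.symm u) (hmem u hu) (σ.symm v) (hmem v hv))
    simpa using this

open Classical in
private noncomputable def SideOne (E : Set (V × V)) (x : V) (N₁ : Set V) (C : Set V) : Prop :=
  x ∈ C ∧ ∃ y, y ∈ C ∧ y ≠ x ∧ y ∈ N₁ ∧ ((x, y) ∈ E ∨ (y, x) ∈ E)

open Classical in
private noncomputable def Fmap (E : Set (V × V)) (x x' : V) (N₁ : Set V) (C : Set V) : Set V :=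
  if SideOne E x N₁ C then insert x' (C \ {x}) else C

open Classical in
private noncomputable def Gmap (x x' : V) (D : Set V) : Set V :=
  if x' ∈ D then insert x (D \ {x'}) else D

theorem stmt9 (E : Set (V × V)) (W : Set V) (x x' : V) (N₁ N₂ : Set V)
    (hx : x ∈ W) (hx' : x' ∉ W)
    (hedges : ∀ e ∈ E, e.1 ∈ W ∧ e.2 ∈ W)
    -- x is a strong articulation point of G
    (hart : ∃ a ∈ W, ∃ b ∈ W, a ≠ x ∧ b ≠ x ∧
      ReachIn E W a b ∧ ReachIn E W b a ∧
      ¬ (ReachIn E (W \ {x}) a b ∧ ReachIn E (W \ {x}) b a))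
    -- N₁, N₂ partition the neighbors of x
    (hpart : N₁ ∪ N₂ = {y | (x, y) ∈ E ∨ (y, x) ∈ E})
    (hdisj : Disjoint N₁ N₂)
    -- every path from a vertex of N₁ to a vertex of N₂ passes through x
    (hsep : ∀ a ∈ N₁, ∀ b ∈ N₂, ¬ ReachIn E (W \ {x}) a b) :
    Nonempty
      ({C : Set V // IsMax2VCS E W C} ≃
        {C : Set V // IsMax2VCS (splitEdgeMap x x' N₁ '' E) (insert x' W) C}) := by
  classical
  set Em : Set (V × V) := splitEdgeMap x x' N₁ '' E with hEm
  have hxx' : x ≠ x' := fun h => hx' (h ▸ hx)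
  have hNW : ∀ y, y ∈ N₁ ∪ N₂ → y ∈ W := by
    intro y hy
    rw [hpart] at hy
    rcases hy with h | h
    · exact (hedges _ h).2
    · exact (hedges _ h).1
  have hN₁W : N₁ ⊆ W := fun y hy => hNW y (Or.inl hy)
  have hx'N₁ : x' ∉ N₁ := fun h => hx' (hN₁W h)
  have hWne : ∀ {v : V}, v ∈ W → v ≠ x' := fun hv h => hx' (h ▸ hv)
  -- unchanged edges survive the split
  have hunch : ∀ p q, (p, q) ∈ E → ¬(p = x ∧ q ∈ N₁) → ¬(q = x ∧ p ∈ N₁) →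
      (p, q) ∈ Em := by
    intro p q hpq h1 h2
    refine ⟨(p, q), hpq, ?_⟩
    unfold splitEdgeMap
    rw [if_neg h1, if_neg h2]
  have hmk1 : ∀ q ∈ N₁, (x, q) ∈ E → (x', q) ∈ Em := by
    intro q hq hxq
    refine ⟨(x, q), hxq, ?_⟩
    unfold splitEdgeMap
    rw [if_pos ⟨rfl, hq⟩]
  have hmk2 : ∀ p ∈ N₁, p ≠ x → (p, x) ∈ E → (p, x') ∈ Em := by
    intro p hp hpx hpxE
    refine ⟨(p, x), hpxE, ?_⟩
    unfold splitEdgeMap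
    rw [if_neg, if_pos ⟨rfl, hp⟩]
    rintro ⟨h, -⟩
    exact hpx h
  -- characterization of edges of Em incident to x'
  have hcharB : ∀ p, (p, x') ∈ Em → (p, x) ∈ E ∧ p ∈ N₁ := by
    rintro p ⟨⟨a, b⟩, he, hmap⟩
    unfold splitEdgeMap at hmap
    split_ifs at hmap with h1 h2 <;> simp only [Prod.mk.injEq] at hmap
    · exact absurd (hmap.2 ▸ h1.2) hx'N₁
    · obtain ⟨rfl, -⟩ := hmap
      exact ⟨h2.1 ▸ he, h2.2⟩
    · obtain ⟨rfl, rfl⟩ := hmap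
      exact absurd (hedges _ he).2 hx'
  have hcharC : ∀ q, (x', q) ∈ Em → (x, q) ∈ E ∧ q ∈ N₁ := by
    rintro q ⟨⟨a, b⟩, he, hmap⟩
    unfold splitEdgeMap at hmap
    split_ifs at hmap with h1 h2 <;> simp only [Prod.mk.injEq] at hmap
    · obtain ⟨-, rfl⟩ := hmap
      exact ⟨h1.1 ▸ he, h1.2⟩
    · exact absurd (hmap.1 ▸ h2.2) hx'N₁
    · obtain ⟨rfl, rfl⟩ := hmap
      exact absurd (hedges _ he).1 hx'
  have hcharD : ∀ p q, p ≠ x' → q ≠ x' → (p, q) ∈ Em →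
      (p, q) ∈ E ∧ (p = x → q ∉ N₁) ∧ (q = x → p ∉ N₁) := by
    rintro p q hpx' hqx' ⟨⟨a, b⟩, he, hmap⟩
    unfold splitEdgeMap at hmap
    split_ifs at hmap with h1 h2 <;> simp only [Prod.mk.injEq] at hmap
    · exact absurd hmap.1.symm hpx'
    · exact absurd hmap.2.symm hqx'
    · obtain ⟨rfl, rfl⟩ := hmap
      exact ⟨he, fun hp hq => h1 ⟨hp, hq⟩, fun hq hp => h2 ⟨hq, hp⟩⟩
  -- if SideOne C holds for a 2VCS C, all proper neighbours of x in C lie in N₁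
  have hallN₁ : ∀ C, C ⊆ W → Is2VCS E C → SideOne E x N₁ C →
      ∀ q, q ∈ C → q ≠ x → ((x, q) ∈ E ∨ (q, x) ∈ E) → q ∈ N₁ := by
    intro C hCW h2 hs q hqC hqx hedge
    obtain ⟨hxC, y, hyC, hyx, hyN₁, -⟩ := hs
    have : q ∈ N₁ ∪ N₂ := by rw [hpart]; exact hedge
    rcases this with h | h
    · exact h
    · exfalso
      have hreach : ReachIn E (C \ {x}) y q :=
        h2.2.2 x hxC y ⟨hyC, hyx⟩ q ⟨hqC, hqx⟩
      exact hsep y hyN₁ q h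
        (reachIn_mono (Set.diff_subset_diff_left hCW) hreach)
  -- no 2VCS of the split graph contains both x and x'
  have hno2 : ∀ D, D ⊆ insert x' W → Is2VCS Em D → x' ∈ D → x ∉ D := by
    intro D hDW' h2 hx'D hxD
    obtain ⟨w, hwD, hwx, hwx'⟩ := exists_third h2.1 x x'
    -- out-neighbour of x' in D \ {x} lies in N₁
    have hsc1 : StronglyConnIn Em (D \ {x}) := h2.2.2 x hxD
    obtain ⟨a, haD, hax', hEax⟩ :
        ∃ q, q ∈ D \ {x} ∧ q ≠ x' ∧ (x', q) ∈ Em := by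
      rcases reachIn_out (hsc1 x' ⟨hx'D, Ne.symm hxx'⟩ w ⟨hwD, hwx⟩) with rfl | ⟨q, hq1, hq2, hq3⟩
      · exact absurd rfl hwx'.symm
      · refine ⟨q, hq1, ?_, hq3⟩
        intro h
        exact hq2 h
    obtain ⟨haxE, haN₁⟩ := hcharC a hEax
    -- out-neighbour of x in D \ {x'} lies in N₂
    have hsc2 : StronglyConnIn Em (D \ {x'}) := h2.2.2 x' hx'D
    obtain ⟨b, hbD, hbx, hEb⟩ :
        ∃ q, q ∈ D \ {x'} ∧ q ≠ x ∧ (x, q) ∈ Em := by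
      rcases reachIn_out (hsc2 x ⟨hxD, hxx'⟩ w ⟨hwD, hwx'⟩) with rfl | ⟨q, hq1, hq2, hq3⟩
      · exact absurd rfl hwx.symm
      · exact ⟨q, hq1, hq2, hq3⟩
    have hbE := hcharD x b hxx' hbD.2 hEb
    have hbN₂ : b ∈ N₂ := by
      have : b ∈ N₁ ∪ N₂ := by rw [hpart]; exact Or.inl hbE.1
      rcases this with h | h
      · exact absurd h (hbE.2.1 rfl)
      · exact h
    -- a path in D \ {x'} from a to b, cut at the first entry into x
    have hreach : ReachIn Em (D \ {x'}) a b :=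
      hsc2 a ⟨haD.1, hax'⟩ b hbD
    have hmapE : ∀ p q, p ∈ (D \ {x'}) \ {x} → q ∈ (D \ {x'}) \ {x} → p ≠ q →
        (p, q) ∈ Em → (p, q) ∈ E :=
      fun p q hp hq _ h => (hcharD p q hp.1.2 hq.1.2 h).1
    have hmapC : ∀ v, v ∈ (D \ {x'}) \ {x} → v ∈ W \ {x} := by
      intro v hv
      refine ⟨?_, hv.2⟩
      rcases hDW' hv.1.1 with h | h
      · exact absurd h hv.1.2
      · exact h
    rcases reachIn_split x hreach haD.2 with h | ⟨p, hpD, hpx, hr, hpxEm⟩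
    · exact hsep a haN₁ b hbN₂ (reachIn_map id hmapC hmapE h)
    · have hpE := hcharD p x hpD.2 hxx' hpxEm
      have hpN₂ : p ∈ N₂ := by
        have : p ∈ N₁ ∪ N₂ := by rw [hpart]; exact Or.inr hpE.1
        rcases this with h | h
        · exact absurd h (hpE.2.2 rfl)
        · exact h
      exact hsep a haN₁ p hpN₂ (reachIn_map id hmapC hmapE hr)
  -- transfer of 2VCS from G to the split graph, side-2 case
  have hfwd1 : ∀ C, C ⊆ W → Is2VCS E C → ¬ SideOne E x N₁ C → Is2VCS Em C := by
    intro C hCW h2 hside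
    refine is2VCS_map E Em C C (Equiv.refl V) (fun v hv => hv) (fun v hv => hv) ?_ h2
    intro p q hp hq hpq hE0
    refine hunch p q hE0 ?_ ?_
    · rintro ⟨rfl, hqN⟩
      exact hside ⟨hp, q, hq, Ne.symm hpq, hqN, Or.inl hE0⟩
    · rintro ⟨rfl, hpN⟩
      exact hside ⟨hq, p, hp, hpq, hpN, Or.inr hE0⟩
  -- transfer of 2VCS from the split graph to G, when x' is not involved
  have hbwd1 : ∀ D, D ⊆ W → Is2VCS Em D → Is2VCS E D := by
    intro D hDW h2
    refine is2VCS_map Em E D D (Equiv.refl V) (fun v hv => hv) (fun v hv => hv) ?_ h2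
    intro p q hp hq _ h
    exact (hcharD p q (fun h' => hx' (h' ▸ hDW hp)) (fun h' => hx' (h' ▸ hDW hq)) h).1
  -- transfer of 2VCS, side-1 case (x gets renamed to x')
  have hfwd2 : ∀ C, C ⊆ W → Is2VCS E C → SideOne E x N₁ C →
      Is2VCS Em (insert x' (C \ {x})) := by
    intro C hCW h2 hs
    have hall := hallN₁ C hCW h2 hs
    refine is2VCS_map E Em C (insert x' (C \ {x})) (Equiv.swap x x') ?_ ?_ ?_ h2
    · intro v hv
      by_cases hvx : v = x
      · subst hvx; rw [Equiv.swap_apply_left]; exact Set.mem_insert _ _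
      · have hvx' : v ≠ x' := hWne (hCW hv)
        rw [Equiv.swap_apply_of_ne_of_ne hvx hvx']
        exact Set.mem_insert_of_mem _ ⟨hv, hvx⟩
    · intro v hv
      rw [Equiv.symm_swap]
      rcases hv with rfl | hv
      · rw [Equiv.swap_apply_right]; exact hs.1
      · rw [Equiv.swap_apply_of_ne_of_ne hv.2 (hWne (hCW hv.1))]
        exact hv.1
    · intro p q hp hq hpq hE0
      by_cases hpx : p = x
      · subst hpx
        have hqN₁ : q ∈ N₁ := hall q hq (Ne.symm hpq) (Or.inl hE0)
        rw [Equiv.swap_apply_left,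
          Equiv.swap_apply_of_ne_of_ne (Ne.symm hpq) (hWne (hCW hq))]
        exact hmk1 q hqN₁ hE0
      · by_cases hqx : q = x
        · subst hqx
          have hpN₁ : p ∈ N₁ := hall p hp hpx (Or.inr hE0)
          rw [Equiv.swap_apply_left,
            Equiv.swap_apply_of_ne_of_ne hpx (hWne (hCW hp))]
          exact hmk2 p hpN₁ hpx hE0
        · rw [Equiv.swap_apply_of_ne_of_ne hpx (hWne (hCW hp)),
            Equiv.swap_apply_of_ne_of_ne hqx (hWne (hCW hq))]
          exact hunch p q hE0 (fun h => hpx h.1) (fun h => hqx h.1)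
  -- transfer back when x' is involved (x' gets renamed to x)
  have hbwd2 : ∀ D, D ⊆ insert x' W → Is2VCS Em D → x' ∈ D →
      Is2VCS E (insert x (D \ {x'})) := by
    intro D hDW' h2 hx'D
    have hxD : x ∉ D := hno2 D hDW' h2 hx'D
    have hDnex : ∀ {v : V}, v ∈ D → v ≠ x := fun hv h => hxD (h ▸ hv)
    refine is2VCS_map Em E D (insert x (D \ {x'})) (Equiv.swap x x') ?_ ?_ ?_ h2
    · intro v hv
      by_cases hvx' : v = x'
      · subst hvx'; rw [Equiv.swap_apply_right]; exact Set.mem_insert _ _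
      · rw [Equiv.swap_apply_of_ne_of_ne (hDnex hv) hvx']
        exact Set.mem_insert_of_mem _ ⟨hv, hvx'⟩
    · intro v hv
      rw [Equiv.symm_swap]
      rcases hv with rfl | hv
      · rw [Equiv.swap_apply_left]; exact hx'D
      · rw [Equiv.swap_apply_of_ne_of_ne (hDnex hv.1) hv.2]
        exact hv.1
    · intro p q hp hq hpq hE0
      by_cases hpx' : p = x'
      · subst hpx'
        obtain ⟨hE1, -⟩ := hcharC q hE0
        rw [Equiv.swap_apply_right,
          Equiv.swap_apply_of_ne_of_ne (hDnex hq) (Ne.symm hpq)]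
        exact hE1
      · by_cases hqx' : q = x'
        · subst hqx'
          obtain ⟨hE1, -⟩ := hcharB p hE0
          rw [Equiv.swap_apply_right,
            Equiv.swap_apply_of_ne_of_ne (hDnex hp) hpq]
          exact hE1
        · rw [Equiv.swap_apply_of_ne_of_ne (hDnex hp) hpx',
            Equiv.swap_apply_of_ne_of_ne (hDnex hq) hqx']
          exact (hcharD p q hpx' hqx' hE0).1
  -- a 2VCS of the split graph avoiding x' is not on side 1
  have hnoside : ∀ D, D ⊆ W → Is2VCS Em D → ¬ SideOne E x N₁ D := by
    rintro D hDW h2 ⟨hxD, y, hyD, hyx, hyN₁, -⟩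
    obtain ⟨q, hqD, hqx, hEq⟩ := Is2VCS.exists_out h2 hxD
    have hqx' : q ≠ x' := hWne (hDW hqD)
    have hqE := hcharD x q hxx' hqx' hEq
    have hqN₂ : q ∈ N₂ := by
      have : q ∈ N₁ ∪ N₂ := by rw [hpart]; exact Or.inl hqE.1
      rcases this with h | h
      · exact absurd h (hqE.2.1 rfl)
      · exact h
    have h2E : Is2VCS E D := hbwd1 D hDW h2
    exact hsep y hyN₁ q hqN₂
      (reachIn_mono (Set.diff_subset_diff_left hDW)
        (h2E.2.2 x hxD y ⟨hyD, hyx⟩ q ⟨hqD, hqx⟩))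
  -- if x' belongs to a 2VCS D of the split graph, replacing it by x gives side 1
  have hsideG : ∀ D, D ⊆ insert x' W → Is2VCS Em D → x' ∈ D →
      SideOne E x N₁ (insert x (D \ {x'})) := by
    intro D hDW' h2 hx'D
    have hxD : x ∉ D := hno2 D hDW' h2 hx'D
    obtain ⟨q, hqD, hqx', hEq⟩ := Is2VCS.exists_out h2 hx'D
    obtain ⟨hqE, hqN₁⟩ := hcharC q hEq
    exact ⟨Set.mem_insert _ _, q, Set.mem_insert_of_mem _ ⟨hqD, hqx'⟩,
      fun h => hxD (h ▸ hqD), hqN₁, Or.inl hqE⟩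
  -- combined forward/backward transfers for the maps Fmap / Gmap
  have hFC2 : ∀ C, C ⊆ W → Is2VCS E C →
      Is2VCS Em (Fmap E x x' N₁ C) ∧ Fmap E x x' N₁ C ⊆ insert x' W := by
    intro C hCW h2
    unfold Fmap
    by_cases hs : SideOne E x N₁ C
    · rw [if_pos hs]
      refine ⟨hfwd2 C hCW h2 hs, ?_⟩
      rintro v (rfl | hv)
      · exact Set.mem_insert _ _
      · exact Set.mem_insert_of_mem _ (hCW hv.1)
    · rw [if_neg hs]
      exact ⟨hfwd1 C hCW h2 hs, fun v hv => Set.mem_insert_of_mem _ (hCW hv)⟩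
  have hGD2 : ∀ D, D ⊆ insert x' W → Is2VCS Em D →
      Is2VCS E (Gmap x x' D) ∧ Gmap x x' D ⊆ W := by
    intro D hDW' h2
    unfold Gmap
    by_cases hm : x' ∈ D
    · rw [if_pos hm]
      refine ⟨hbwd2 D hDW' h2 hm, ?_⟩
      rintro v (rfl | hv)
      · exact hx
      · rcases hDW' hv.1 with h | h
        · exact absurd h hv.2
        · exact h
    · rw [if_neg hm]
      have hDW : D ⊆ W := by
        intro v hv
        rcases hDW' hv with rfl | h
        · exact absurd hv hm
        · exact h
      exact ⟨hbwd1 D hDW h2, hDW⟩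
  -- Gmap ∘ Fmap = id on subsets of W
  have hGF : ∀ C : Set V, C ⊆ W → Gmap x x' (Fmap E x x' N₁ C) = C := by
    intro C hCW
    have hx'C : x' ∉ C := fun h => hx' (hCW h)
    unfold Fmap Gmap
    by_cases hs : SideOne E x N₁ C
    · rw [if_pos hs, if_pos (Set.mem_insert _ _),
        Set.insert_diff_self_of_notMem (fun h => hx'C h.1),
        Set.insert_diff_singleton, Set.insert_eq_self.mpr hs.1]
    · rw [if_neg hs, if_neg hx'C]
  -- Fmap ∘ Gmap = id on 2VCSs of the split graph
  have hFG : ∀ D : Set V, D ⊆ insert x' W → Is2VCS Em D →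
      Fmap E x x' N₁ (Gmap x x' D) = D := by
    intro D hDW' h2
    unfold Gmap Fmap
    by_cases hm : x' ∈ D
    · have hxD : x ∉ D := hno2 D hDW' h2 hm
      rw [if_pos hm, if_pos (hsideG D hDW' h2 hm),
        Set.insert_diff_self_of_notMem (fun h => hxD h.1),
        Set.insert_diff_singleton, Set.insert_eq_self.mpr hm]
    · have hDW : D ⊆ W := by
        intro v hv
        rcases hDW' hv with rfl | h
        · exact absurd hv hm
        · exact h
      rw [if_neg hm, if_neg (hnoside D hDW h2)]
  -- maximality transfers forward
  have hFmax : ∀ C, IsMax2VCS E W C → IsMax2VCS Em (insert x' W) (Fmap E x x' N₁ C) := by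
    rintro C ⟨hCW, h2, hmax⟩
    obtain ⟨h2', hFW'⟩ := hFC2 C hCW h2
    refine ⟨hFW', h2', ?_⟩
    intro D hsub hDW' h2D
    obtain ⟨h2G, hGW⟩ := hGD2 D hDW' h2D
    refine hmax (Gmap x x' D) ?_ hGW h2G
    -- C ⊂ Gmap x x' D
    unfold Fmap at hsub
    by_cases hs : SideOne E x N₁ C
    · rw [if_pos hs] at hsub
      have hx'D : x' ∈ D := hsub.1 (Set.mem_insert _ _)
      have hxD : x ∉ D := hno2 D hDW' h2D hx'D
      have hCsub : C ⊆ Gmap x x' D := by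
        intro v hv
        unfold Gmap
        rw [if_pos hx'D]
        by_cases hvx : v = x
        · exact hvx ▸ Set.mem_insert _ _
        · exact Set.mem_insert_of_mem _
            ⟨hsub.1 (Set.mem_insert_of_mem _ ⟨hv, hvx⟩), hWne (hCW hv)⟩
      obtain ⟨d, hdD, hdF⟩ := Set.exists_of_ssubset hsub
      have hdx' : d ≠ x' := fun h => hdF (h ▸ Set.mem_insert _ _)
      have hdx : d ≠ x := fun h => hxD (h ▸ hdD)
      refine (Set.ssubset_iff_of_subset hCsub).mpr ⟨d, ?_, ?_⟩
      · unfold Gmap; rw [if_pos hx'D]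
        exact Set.mem_insert_of_mem _ ⟨hdD, hdx'⟩
      · intro hdC
        exact hdF (Set.mem_insert_of_mem _ ⟨hdC, hdx⟩)
    · rw [if_neg hs] at hsub
      unfold Gmap
      by_cases hm : x' ∈ D
      · rw [if_pos hm]
        have hxD : x ∉ D := hno2 D hDW' h2D hm
        have hCsub : C ⊆ insert x (D \ {x'}) := fun v hv =>
          Set.mem_insert_of_mem _ ⟨hsub.1 hv, hWne (hCW hv)⟩
        refine (Set.ssubset_iff_of_subset hCsub).mpr ⟨x, Set.mem_insert _ _, ?_⟩
        exact fun hxC => hxD (hsub.1 hxC)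
      · rw [if_neg hm]
        exact hsub
  -- maximality transfers backward
  have hGmax : ∀ D, IsMax2VCS Em (insert x' W) D → IsMax2VCS E W (Gmap x x' D) := by
    rintro D ⟨hDW', h2D, hmax⟩
    obtain ⟨h2G, hGW⟩ := hGD2 D hDW' h2D
    refine ⟨hGW, h2G, ?_⟩
    intro C' hsub hC'W h2C'
    obtain ⟨h2F, hFW'⟩ := hFC2 C' hC'W h2C'
    refine hmax (Fmap E x x' N₁ C') ?_ hFW' h2F
    -- D ⊂ Fmap E x x' N₁ C'
    unfold Gmap at hsub
    by_cases hm : x' ∈ D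
    · rw [if_pos hm] at hsub
      have hxD : x ∉ D := hno2 D hDW' h2D hm
      have hxC' : x ∈ C' := hsub.1 (Set.mem_insert _ _)
      have hDnex2 : ∀ {v : V}, v ∈ D → v ≠ x := fun hv h => hxD (h ▸ hv)
      have hs : SideOne E x N₁ C' := by
        obtain ⟨q, hqD, hqx', hEq⟩ := Is2VCS.exists_out h2D hm
        obtain ⟨hqE, hqN₁⟩ := hcharC q hEq
        exact ⟨hxC', q, hsub.1 (Set.mem_insert_of_mem _ ⟨hqD, hqx'⟩),
          fun h => hxD (h ▸ hqD), hqN₁, Or.inl hqE⟩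
      unfold Fmap
      rw [if_pos hs]
      have hDsub : D ⊆ insert x' (C' \ {x}) := by
        intro v hv
        by_cases hvx' : v = x'
        · exact hvx' ▸ Set.mem_insert _ _
        · exact Set.mem_insert_of_mem _
            ⟨hsub.1 (Set.mem_insert_of_mem _ ⟨hv, hvx'⟩), hDnex2 hv⟩
      obtain ⟨d, hdC', hdG⟩ := Set.exists_of_ssubset hsub
      have hdx : d ≠ x := fun h => hdG (h ▸ Set.mem_insert _ _)
      have hdx' : d ≠ x' := hWne (hC'W hdC')
      refine (Set.ssubset_iff_of_subset hDsub).mpr ⟨d, ?_, ?_⟩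
      · exact Set.mem_insert_of_mem _ ⟨hdC', hdx⟩
      · intro hdD
        exact hdG (Set.mem_insert_of_mem _ ⟨hdD, hdx'⟩)
    · rw [if_neg hm] at hsub
      have hDW : D ⊆ W := by
        intro v hv
        rcases hDW' hv with rfl | h
        · exact absurd hv hm
        · exact h
      unfold Fmap
      by_cases hs : SideOne E x N₁ C'
      · rw [if_pos hs]
        obtain ⟨hxC', y, hyC', hyx, hyN₁, -⟩ := hs
        have hxD : x ∉ D := by
          intro hxD
          obtain ⟨q, hqD, hqx, hEq⟩ := Is2VCS.exists_out h2D hxD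
          have hqx' : q ≠ x' := fun h => hm (h ▸ hqD)
          have hqE := hcharD x q hxx' hqx' hEq
          have hqN₂ : q ∈ N₂ := by
            have : q ∈ N₁ ∪ N₂ := by rw [hpart]; exact Or.inl hqE.1
            rcases this with h | h
            · exact absurd h (hqE.2.1 rfl)
            · exact h
          exact hsep y hyN₁ q hqN₂
            (reachIn_mono (Set.diff_subset_diff_left hC'W)
              (h2C'.2.2 x hxC' y ⟨hyC', hyx⟩ q ⟨hsub.subset hqD, hqx⟩))
        have hDsub : D ⊆ insert x' (C' \ {x}) := fun v hv =>
          Set.mem_insert_of_mem _ ⟨hsub.subset hv, fun h => hxD (h ▸ hv)⟩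
        refine (Set.ssubset_iff_of_subset hDsub).mpr ⟨x', Set.mem_insert _ _, hm⟩
      · rw [if_neg hs]
        exact hsub
  exact ⟨{
    toFun := fun C => ⟨Fmap E x x' N₁ C.1, hFmax C.1 C.2⟩
    invFun := fun D => ⟨Gmap x x' D.1, hGmax D.1 D.2⟩
    left_inv := fun C => Subtype.ext (hGF C.1 C.2.1)
    right_inv := fun D => Subtype.ext (hFG D.1 D.2.1 D.2.2.1) }⟩
end

section
/- Let G be a digraph, u a vertex, and let P_1, ..., P_i be paths in G each starting at u, where G_1 = G and G_{j+1} is obtained from G_j by reversing the edges of P_j (with P_j a path in G_j). Let S be a vertex set containing u, T = V \ S, and suppose exactly k̃ of the paths P_1, ..., P_i end in T. Then the number of edges from S to T in G_{i+1} equals the number of edges from S to T in G minus k̃. -/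
/-
Reversing a path P that starts at u ∈ S turns every edge of P crossing from S to T into one
crossing from T to S and vice versa. Along P the crossings alternate direction, so P has
exactly as many S→T as T→S edges when it ends in S, and one more S→T edge when it ends in T.
Hence each reversal lowers the S→T edge count by one exactly when the path ends in T, and
summing over the i reversals gives the claim. Simplicity of P is what makes its edges a
sub-multiset of the current graph, so that the truncated multiset subtraction removes all of them.
-/

variable {V : Type*} [DecidableEq V]

/-- The (directed) edges used by a path given as a list of vertices. -/
def pathEdges (l : List V) : List (V × V) := l.zip l.tail

/-- The number of edges of the multigraph `E` going from `S` to its complement. -/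
def crossCount (E : Multiset (V × V)) (S : Finset V) : ℕ :=
  Multiset.countP (fun e => e.1 ∈ S ∧ e.2 ∉ S) E

/-- `l` is a simple (directed) path starting at `u` in the multigraph `E`. -/
def IsSimplePathFrom (E : Multiset (V × V)) (u : V) (l : List V) : Prop :=
  l ≠ [] ∧ l.head? = some u ∧ l.Nodup ∧
    List.Chain' (fun p q => (p, q) ∈ E) l

section

omit [DecidableEq V]

@[simp]
lemma pathEdges_cons_cons (a b : V) (l : List V) :
    pathEdges (a :: b :: l) = (a, b) :: pathEdges (b :: l) := rfl

lemma List.Nodup.pathEdges : ∀ {l : List V}, l.Nodup → (pathEdges l).Nodup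
  | [], _ | [_], _ => List.nodup_nil
  | a :: b :: t, h => by
    rw [pathEdges_cons_cons]
    exact List.nodup_cons.2
      ⟨fun hab => (List.nodup_cons.1 h).1 (List.of_mem_zip hab).1, (List.nodup_cons.1 h).2.pathEdges⟩

lemma List.IsChain.rel_of_mem_pathEdges {R : V → V → Prop} :
    ∀ {l : List V}, l.IsChain R → ∀ e ∈ pathEdges l, R e.1 e.2
  | [], _, _, he | [_], _, _, he => by simp [pathEdges] at he
  | a :: b :: t, h, e, he => by
    rw [pathEdges_cons_cons, List.mem_cons] at he
    rcases he with rfl | he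
    · exact (List.isChain_cons_cons.1 h).1
    · exact (List.isChain_cons_cons.1 h).2.rel_of_mem_pathEdges e he

lemma IsSimplePathFrom.pathEdges_le {E : Multiset (V × V)} {u : V} {l : List V}
    (hl : IsSimplePathFrom E u l) : (pathEdges l : Multiset (V × V)) ≤ E := by
  obtain ⟨-, -, hnodup, hchain⟩ := hl
  rw [Multiset.le_iff_subset (Multiset.coe_nodup.2 hnodup.pathEdges)]
  exact fun e he => hchain.rel_of_mem_pathEdges e he

end

lemma countP_pathEdges_out_add_ite (S : Finset V) :
    ∀ (a : V) (l : List V),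
      (pathEdges (a :: l)).countP (fun e => e.1 ∈ S ∧ e.2 ∉ S) + (if a ∈ S then 0 else 1) =
        (pathEdges (a :: l)).countP (fun e => e.2 ∈ S ∧ e.1 ∉ S) +
          (if (a :: l).getLast (List.cons_ne_nil a l) ∈ S then 0 else 1)
  | a, [] => rfl
  | a, b :: t => by
    have ih := countP_pathEdges_out_add_ite S b t
    rw [List.getLast_cons_cons, pathEdges_cons_cons, List.countP_cons, List.countP_cons]
    by_cases ha : a ∈ S <;> by_cases hb : b ∈ S <;> simp [ha, hb] at ih ⊢ <;> omega

def reversePath (E : Multiset (V × V)) (l : List V) : Multiset (V × V) :=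
  (E - (pathEdges l : Multiset (V × V))) + ((pathEdges l).map Prod.swap : Multiset (V × V))

lemma crossCount_add (E F : Multiset (V × V)) (S : Finset V) :
    crossCount (E + F) S = crossCount E S + crossCount F S :=
  Multiset.countP_add _ _ _

lemma crossCount_map_swap (E : Multiset (V × V)) (S : Finset V) :
    crossCount (E.map Prod.swap) S = E.countP (fun e => e.2 ∈ S ∧ e.1 ∉ S) := by
  rw [crossCount, Multiset.countP_map, Multiset.countP_eq_card_filter]
  rfl

lemma crossCount_reversePath {E : Multiset (V × V)} {S : Finset V} {a b : V} {l : List V}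
    (hle : (pathEdges l : Multiset (V × V)) ≤ E) (hhead : l.head? = some a) (ha : a ∈ S)
    (hlast : l.getLast? = some b) :
    crossCount (reversePath E l) S + (if b ∈ S then 0 else 1) = crossCount E S := by
  rcases l with _ | ⟨a', l⟩
  · simp at hhead
  obtain rfl : a = a' := by simpa using hhead.symm
  rw [List.getLast?_eq_some_getLast (List.cons_ne_nil a l), Option.some_inj] at hlast
  have hparity := countP_pathEdges_out_add_ite S a l
  rw [if_pos ha, hlast] at hparity
  conv_rhs => rw [← tsub_add_cancel_of_le hle]
  rw [reversePath, crossCount_add, crossCount_add, ← Multiset.map_coe, crossCount_map_swap]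
  simp only [crossCount, Multiset.coe_countP]
  omega

lemma add_ncard_eq_of_forall_add_ite_eq (f : ℕ → ℕ) (q : ℕ → Prop) [DecidablePred q] (n : ℕ)
    (hf : ∀ j, 1 ≤ j → j ≤ n → f (j + 1) + (if q j then 1 else 0) = f j) :
    f (n + 1) + {j | 1 ≤ j ∧ j ≤ n ∧ q j}.ncard = f 1 := by
  have hset : {j | 1 ≤ j ∧ j ≤ n ∧ q j} = ↑((Finset.Icc 1 n).filter q) := by
    ext j
    simp [and_assoc]
  rw [hset, Set.ncard_coe_finset]
  clear hset
  induction n with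
  | zero => simp
  | succ m ih =>
    rw [← Finset.insert_Icc_right_eq_Icc_add_one (by omega), Finset.filter_insert]
    have hm := hf (m + 1) (by omega) le_rfl
    have hprev := ih fun j hj1 hjm => hf j hj1 (by omega)
    split_ifs at hm ⊢
    · rw [Finset.card_insert_of_notMem (by simp)]
      omega
    · omega

theorem stmt12 (E : Multiset (V × V)) (u : V) (i : ℕ)
    (Gseq : ℕ → Multiset (V × V)) (P : ℕ → List V)
    (S T : Finset V) (hu : u ∈ S) (hT : ∀ v : V, v ∈ T ↔ v ∉ S)
    (hG1 : Gseq 1 = E)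
    (hpath : ∀ j, 1 ≤ j → j ≤ i → IsSimplePathFrom (Gseq j) u (P j))
    (hstep : ∀ j, 1 ≤ j → j ≤ i →
      Gseq (j + 1) =
        (Gseq j - (pathEdges (P j) : Multiset (V × V))) +
          ((pathEdges (P j)).map Prod.swap : Multiset (V × V)))
    (k : ℕ)
    (hk : k = Set.ncard {j : ℕ | 1 ≤ j ∧ j ≤ i ∧
      ∃ t ∈ T, (P j).getLast? = some t}) :
    crossCount (Gseq (i + 1)) S + k = crossCount E S := by
  classical
  rw [hk, ← hG1]
  refine add_ncard_eq_of_forall_add_ite_eq (fun j => crossCount (Gseq j) S) _ i fun j hj1 hji => ?_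
  have hpj := hpath j hj1 hji
  have hlast := List.getLast?_eq_some_getLast hpj.1
  have hends : (∃ t ∈ T, (P j).getLast? = some t) ↔ (P j).getLast hpj.1 ∉ S := by
    simp [hlast, hT]
  have hreverse := crossCount_reversePath hpj.pathEdges_le hpj.2.1 hu hlast
  rw [hstep j hj1 hji]
  simp only [hends]
  split_ifs at hreverse ⊢ <;> assumption
end

section
/- Let G be a strongly connected digraph with at least three vertices and no strong articulation point (i.e., G is 2-vertex-connected). Then for every pair of distinct vertices u, v there exist two internally vertex-disjoint directed paths from u to v. -/
variable {V : Type*}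

/-- `l` is a directed path from `a` to `b` in the digraph `E`. -/
def IsPath (E : Set (V × V)) (a b : V) (l : List V) : Prop :=
  l.head? = some a ∧ l.getLast? = some b ∧
    List.Chain' (fun p q => (p, q) ∈ E) l

/-!
Induct along a walk `u → ⋯ → w → v`. Given internally disjoint simple paths `P₁`, `P₂` from
`u` to `w`, take a simple path `R` from `u` to `v` avoiding `w` (it exists since `w` is not a
strong articulation point), and let `z` be the last vertex of `R` on `P₁ ∪ P₂`, say on `P₁`.
Then `P₁` up to `z` followed by the rest of `R`, and `P₂` followed by the edge `w → v`, are
internally disjoint simple paths from `u` to `v`.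
-/

theorem List.exists_split_at_last {α : Type*} {p : α → Prop} :
    ∀ {l : List α}, (∃ x ∈ l, p x) → ∃ s z t, l = s ++ z :: t ∧ p z ∧ ∀ x ∈ t, ¬ p x
  | [], h => by simp at h
  | x :: l, h => by
    by_cases hl : ∃ y ∈ l, p y
    · obtain ⟨s, z, t, rfl, hz, ht⟩ := exists_split_at_last hl
      exact ⟨x :: s, z, t, rfl, hz, ht⟩
    · refine ⟨[], x, l, rfl, ?_, fun y hy hpy => hl ⟨y, hy, hpy⟩⟩
      obtain ⟨y, hy, hpy⟩ := h
      rcases List.mem_cons.1 hy with rfl | hy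
      exacts [hpy, (hl ⟨y, hy, hpy⟩).elim]

section

variable {E : Set (V × V)} {a b c : V} {l s t : List V}

theorem isPath_singleton (a : V) : IsPath E a a [a] :=
  ⟨rfl, rfl, List.isChain_singleton a⟩

namespace IsPath

theorem start_mem (h : IsPath E a b l) : a ∈ l :=
  List.mem_of_mem_head? h.1

theorem end_mem (h : IsPath E a b l) : b ∈ l :=
  List.mem_of_getLast? h.2.1

theorem cons (hab : (a, b) ∈ E) (h : IsPath E b c l) : IsPath E a c (a :: l) := by
  obtain ⟨hhead, hlast, hchain⟩ := h
  obtain ⟨l, rfl⟩ : ∃ l', l = b :: l' := by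
    cases l with
    | nil => simp at hhead
    | cons x l' => exact ⟨l', by simpa using hhead⟩
  exact ⟨rfl, by simpa [List.getLast?_cons] using hlast,
    List.isChain_cons_cons.2 ⟨hab, hchain⟩⟩

theorem append (h₁ : IsPath E a b l) (h₂ : IsPath E b c (b :: t)) : IsPath E a c (l ++ t) := by
  obtain ⟨hhead₁, hlast₁, hchain₁⟩ := h₁
  obtain ⟨-, hlast₂, hchain₂⟩ := h₂
  refine ⟨by simp [List.head?_append, hhead₁], ?_,
    List.isChain_append.2 ⟨hchain₁, hchain₂.tail, ?_⟩⟩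
  · rw [List.getLast?_cons, Option.some_inj] at hlast₂
    rw [List.getLast?_append, hlast₁, ← hlast₂]
    cases t.getLast? <;> rfl
  · rw [hlast₁]
    intro x hx
    obtain rfl := Option.mem_some_iff.1 hx
    exact (List.isChain_cons.1 hchain₂).1

theorem concat (h : IsPath E a b l) (hbc : (b, c) ∈ E) : IsPath E a c (l ++ [c]) :=
  h.append ((isPath_singleton c).cons hbc)

theorem takeUntil (h : IsPath E a b (s ++ c :: t)) : IsPath E a c (s ++ [c]) :=
  ⟨by simpa [List.head?_append] using h.1, by simp, h.2.2.prefix (by simp)⟩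

theorem dropUntil (h : IsPath E a b (s ++ c :: t)) : IsPath E c b (c :: t) :=
  ⟨rfl, List.getLast?_append_cons s c t ▸ h.2.1, h.2.2.suffix (List.suffix_append s _)⟩

end IsPath

theorem ReachIn.exists_nodup_isPath {C : Set V} (h : ReachIn E C a b) (hb : b ∈ C) :
    ∃ l, IsPath E a b l ∧ l.Nodup ∧ ∀ x ∈ l, x ∈ C := by
  induction h using Relation.ReflTransGen.head_induction_on with
  | refl => exact ⟨[b], isPath_singleton b, List.nodup_singleton b, by simpa using hb⟩
  | @head a c hac _ ih =>
    obtain ⟨l, hl, hlN, hlC⟩ := ih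
    by_cases ha : a ∈ l
    · obtain ⟨s, t, rfl⟩ := List.append_of_mem ha
      exact ⟨a :: t, hl.dropUntil, hlN.sublist (List.sublist_append_right s _),
        fun x hx => hlC x (List.mem_append_right s hx)⟩
    · exact ⟨a :: l, hl.cons hac.2.2, List.nodup_cons.2 ⟨ha, hlN⟩,
        List.forall_mem_cons.2 ⟨hac.1, hlC⟩⟩

def TwoDisjointSimplePaths (E : Set (V × V)) (u v : V) : Prop :=
  ∃ l₁ l₂ : List V, IsPath E u v l₁ ∧ IsPath E u v l₂ ∧ l₁.Nodup ∧ l₂.Nodup ∧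
    ∀ x ∈ l₁, x ∈ l₂ → x = u ∨ x = v

namespace TwoDisjointSimplePaths

variable {u v w z : V} {P₁ P₂ : List V}

/-- `[u, v]` has no interior vertex, so it is internally disjoint from itself. -/
theorem of_edge (huv : u ≠ v) (he : (u, v) ∈ E) : TwoDisjointSimplePaths E u v :=
  have hpath : IsPath E u v [u, v] := (isPath_singleton v).cons he
  ⟨[u, v], [u, v], hpath, hpath, by simpa using huv, by simpa using huv, by simp⟩

theorem reroute (hP₁ : IsPath E u w P₁) (hN₁ : P₁.Nodup) (hP₂ : IsPath E u w P₂)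
    (hN₂ : P₂.Nodup) (hdisj : ∀ x ∈ P₁, x ∈ P₂ → x = u ∨ x = w) (hz : z ∈ P₁)
    (hT : IsPath E z v (z :: t)) (hTN : (z :: t).Nodup) (ht : ∀ x ∈ t, x ∉ P₁ ∧ x ∉ P₂)
    (hwT : w ∉ z :: t) (hvu : v ≠ u) (he : (w, v) ∈ E) : TwoDisjointSimplePaths E u v := by
  obtain ⟨s, t₁, rfl⟩ := List.append_of_mem hz
  have hwz : w ≠ z := fun h => hwT (h ▸ List.mem_cons_self)
  have hws : w ∉ s := fun hw => List.disjoint_of_nodup_append hN₁ hw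
    (List.mem_of_getLast? (List.getLast?_append_cons s z t₁ ▸ hP₁.2.1))
  have hzs : z ∉ s := fun h =>
    (List.nodup_cons.1 (List.nodup_middle.1 hN₁)).1 (List.mem_append_left t₁ h)
  have hvP₂ : v ∉ P₂ := by
    rcases List.mem_cons.1 hT.end_mem with rfl | hvt
    · intro hv
      rcases hdisj v hz hv with h | h
      exacts [hvu h, hwz h.symm]
    · exact (ht v hvt).2
  have hN₁' : (s ++ z :: t).Nodup := by
    refine List.nodup_append.2 ⟨hN₁.sublist (List.sublist_append_left s _), hTN, ?_⟩
    rintro x hxs y hy rfl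
    rcases List.mem_cons.1 hy with rfl | hxt
    exacts [hzs hxs, (ht x hxt).1 (List.mem_append_left _ hxs)]
  have hN₂' : (P₂ ++ [v]).Nodup := by
    refine List.nodup_append.2 ⟨hN₂, List.nodup_singleton v, ?_⟩
    rintro x hx _ hy rfl
    exact hvP₂ (List.mem_singleton.1 hy ▸ hx)
  refine ⟨s ++ z :: t, P₂ ++ [v], by simpa using hP₁.takeUntil.append hT, hP₂.concat he,
    hN₁', hN₂', fun x hx₁ hx₂ => ?_⟩
  rcases List.mem_append.1 hx₂ with hxP₂ | hxv
  · rcases List.mem_append.1 hx₁ with hxs | hxzt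
    · exact (hdisj x (List.mem_append_left _ hxs) hxP₂).imp_right
        fun (hxw : x = w) => (hws (hxw ▸ hxs)).elim
    · rcases List.mem_cons.1 hxzt with rfl | hxt
      · exact (hdisj x hz hxP₂).imp_right fun (hxw : x = w) => (hwz hxw.symm).elim
      · exact ((ht x hxt).2 hxP₂).elim
  · exact Or.inr (List.mem_singleton.1 hxv)

theorem extend (h : TwoDisjointSimplePaths E u w) (hR : ReachIn E {w}ᶜ u v)
    (hwv : w ≠ v) (hvu : v ≠ u) (he : (w, v) ∈ E) : TwoDisjointSimplePaths E u v := by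
  obtain ⟨P₁, P₂, hP₁, hP₂, hN₁, hN₂, hdisj⟩ := h
  obtain ⟨R, hR, hRN, hRw⟩ := hR.exists_nodup_isPath hwv.symm
  obtain ⟨s, z, t, rfl, hz, ht⟩ :=
    List.exists_split_at_last (p := fun x => x ∈ P₁ ∨ x ∈ P₂)
      ⟨u, hR.start_mem, Or.inl hP₁.start_mem⟩
  have hTN : (z :: t).Nodup := hRN.sublist (List.sublist_append_right s _)
  have hwT : w ∉ z :: t := fun hw => hRw w (List.mem_append_right s hw) rfl
  rcases hz with hz | hz
  · exact reroute hP₁ hN₁ hP₂ hN₂ hdisj hz hR.dropUntil hTN (fun x hx => not_or.1 (ht x hx))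
      hwT hvu he
  · exact reroute hP₂ hN₂ hP₁ hN₁ (fun x h₂ h₁ => hdisj x h₁ h₂) hz hR.dropUntil hTN
      (fun x hx => (not_or.1 (ht x hx)).symm) hwT hvu he

end TwoDisjointSimplePaths

theorem ReachIn.twoDisjointSimplePaths
    (hart : ∀ x : V, ∀ a b : V, a ≠ x → b ≠ x → ReachIn E ({x}ᶜ : Set V) a b) {u v : V}
    (h : ReachIn E Set.univ u v) (huv : u ≠ v) : TwoDisjointSimplePaths E u v := by
  induction h with
  | refl => exact absurd rfl huv
  | @tail w v _ hstep ih =>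
    by_cases hwu : w = u
    · exact TwoDisjointSimplePaths.of_edge huv (hwu ▸ hstep.2.2)
    by_cases hwv : w = v
    · exact hwv ▸ ih (hwv ▸ huv)
    exact (ih (Ne.symm hwu)).extend (hart w u v (Ne.symm hwu) (Ne.symm hwv)) hwv huv.symm
      hstep.2.2

end

theorem stmt19_general (E : Set (V × V))
    -- G is strongly connected
    (hsc : ∀ a b : V, ReachIn E Set.univ a b)
    -- G has no strong articulation point: removing any vertex leaves it strongly connected
    (hart : ∀ x : V, ∀ a b : V, a ≠ x → b ≠ x →
      ReachIn E ({x}ᶜ : Set V) a b) :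
    ∀ u v : V, u ≠ v →
      ∃ l₁ l₂ : List V, IsPath E u v l₁ ∧ IsPath E u v l₂ ∧
        ∀ w : V, w ∈ l₁ → w ∈ l₂ → w = u ∨ w = v := by
  intro u v huv
  obtain ⟨l₁, l₂, h₁, h₂, -, -, hdisj⟩ := (hsc u v).twoDisjointSimplePaths hart huv
  exact ⟨l₁, l₂, h₁, h₂, hdisj⟩

theorem stmt19 [Fintype V] (E : Set (V × V))
    -- G has at least three vertices
    (hcard : ∃ a b c : V, a ≠ b ∧ a ≠ c ∧ b ≠ c)
    -- G is strongly connected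
    (hsc : ∀ a b : V, ReachIn E Set.univ a b)
    -- G has no strong articulation point: removing any vertex leaves it strongly connected
    (hart : ∀ x : V, ∀ a b : V, a ≠ x → b ≠ x →
      ReachIn E ({x}ᶜ : Set V) a b) :
    ∀ u v : V, u ≠ v →
      ∃ l₁ l₂ : List V, IsPath E u v l₁ ∧ IsPath E u v l₂ ∧
        ∀ w : V, w ∈ l₁ → w ∈ l₂ → w = u ∨ w = v :=
  stmt19_general E hsc hart
end
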